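/- arXiv:1505.00191 — 6 statements merged into one kernel-verified Lean document; each statement's English description precedes it below -/
import Mathlib

section
/- If σ is a 3-fold twist (screw motion with rotational component of order 3) preserving the cubic tessellation of ℝ³, then its axis has direction parallel to (1,1,1) up to the action of the point group, and the norm of its translational component lies in (√3/3)·ℤ. Moreover, if the axis of σ contains a vertex of ℤ³ then the norm lies in √3·ℤ. -/
/-!
The linear part `T` of the rotational component `r` is also the linear part of the twist, so it
maps `ℤ³` into itself; being an isometry it sends each basis vector to `±` a basis vector, i.e.
it is a signed permutation matrix with underlying permutation `σ`. From `T³ = 1` we get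
`σ³ = id`, and `σ ≠ id`, since otherwise `T = 1` and `r`, which fixes a point, would be trivial.
So `σ` is a 3-cycle; as `T` fixes the axis direction `v`, we have `vᵢ = ±v_{σ i}`, and all
coordinates of `v` have the same absolute value. Flipping signs of coordinates sends `v` to a
multiple of `(1,1,1)`, and `‖w‖ = √3 |w₀|`. Finally `f³(0) = 3w` lies in `ℤ³`, and if the axis
contains a vertex `q`, then so does `w = f q - q`.
-/

noncomputable section
open scoped RealInnerProductSpace

abbrev E3 : Type := EuclideanSpace ℝ (Fin 3)

def vec (x y z : ℝ) : E3 := (WithLp.equiv 2 (Fin 3 → ℝ)).symm ![x, y, z]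

/-- The vertex set of the cubic tessellation: the integer lattice ℤ³. -/
def latt : Set E3 := {p | ∀ i, ∃ n : ℤ, p i = (n : ℝ)}

/-- An isometry belongs to the symmetry group [4,3,4] of the cubic tessellation
iff it preserves the integer lattice. -/
def PreservesLatt (f : E3 ≃ᵢ E3) : Prop := ∀ p : E3, p ∈ latt ↔ f p ∈ latt

/-- `f` is a rotation of order `n` about the line through `p` with direction `v`:
it fixes the line pointwise and has order `n` in the isometry group. -/
def IsRotationAbout (f : E3 ≃ᵢ E3) (p v : E3) (n : ℕ) : Prop :=
  v ≠ 0 ∧ (∀ t : ℝ, f (p + t • v) = p + t • v) ∧ orderOf f = n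

/-- `f` is a twist (screw motion): the commuting product of a rotation `r` of order `n ≥ 2`
about the line through `p` in direction `v` with the translation by `w ≠ 0`, `w` parallel to `v`. -/
def IsTwist (f : E3 ≃ᵢ E3) (p v w : E3) (n : ℕ) : Prop :=
  2 ≤ n ∧ w ≠ 0 ∧ (∃ s : ℝ, w = s • v) ∧
  ∃ r : E3 ≃ᵢ E3, IsRotationAbout r p v n ∧ (∀ x, f x = r x + w) ∧ (∀ x, r (x + w) = r x + w)

namespace IsometryEquiv

variable {E : Type*} [NormedAddCommGroup E] [NormedSpace ℝ E]

@[simps]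
def toRealLinearIsometryEquivHom : (E ≃ᵢ E) →* (E ≃ₗᵢ[ℝ] E) where
  toFun r := r.toRealLinearIsometryEquiv
  map_one' := by ext x; simp
  map_mul' r s := by
    ext x
    rw [LinearIsometryEquiv.coe_mul, Function.comp_apply, toRealLinearIsometryEquiv_apply s,
      map_sub]
    simp only [toRealLinearIsometryEquiv_apply, mul_apply]
    abel

lemma toRealLinearIsometryEquiv_apply_eq_self {r : E ≃ᵢ E} {p v : E} (h₀ : r p = p)
    (h₁ : r (p + v) = p + v) : r.toRealLinearIsometryEquiv v = v := by
  calc r.toRealLinearIsometryEquiv v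
      = r.toRealLinearIsometryEquiv (p + v) - r.toRealLinearIsometryEquiv p := by
        rw [← map_sub, add_sub_cancel_left]
    _ = v := by simp only [toRealLinearIsometryEquiv_apply, h₀, h₁]; abel

lemma toRealLinearIsometryEquiv_eq_of_forall_apply_eq_add {f r : E ≃ᵢ E} {w : E}
    (h : ∀ x, f x = r x + w) : f.toRealLinearIsometryEquiv = r.toRealLinearIsometryEquiv := by
  ext x
  simp [toRealLinearIsometryEquiv_apply, h]

lemma eq_one_of_toRealLinearIsometryEquiv_eq_one {r : E ≃ᵢ E} {p : E}
    (h : r.toRealLinearIsometryEquiv = 1) (hp : r p = p) : r = 1 := by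
  have hr : ∀ x, r x = x + r 0 := fun x => by
    rw [← sub_eq_iff_eq_add, ← toRealLinearIsometryEquiv_apply, h, LinearIsometryEquiv.coe_one,
      id]
  have h0 : r 0 = 0 := by simpa [hp] using hr p
  ext x
  rw [hr, h0, add_zero]
  rfl

end IsometryEquiv

lemma zero_mem_latt : (0 : E3) ∈ latt := fun _ => ⟨0, by simp⟩

lemma sub_mem_latt {a b : E3} (ha : a ∈ latt) (hb : b ∈ latt) : a - b ∈ latt := by
  intro i
  obtain ⟨n, hn⟩ := ha i
  obtain ⟨m, hm⟩ := hb i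
  exact ⟨n - m, by rw [PiLp.sub_apply, hn, hm]; push_cast; rfl⟩

lemma single_mem_latt (i : Fin 3) : EuclideanSpace.single i (1 : ℝ) ∈ latt := by
  intro j
  refine ⟨if j = i then 1 else 0, ?_⟩
  split_ifs <;> simp [*]

lemma PreservesLatt.mapsTo_toRealLinearIsometryEquiv {f : E3 ≃ᵢ E3} (hf : PreservesLatt f) :
    Set.MapsTo f.toRealLinearIsometryEquiv latt latt := fun x hx => by
  rw [f.toRealLinearIsometryEquiv_apply]
  exact sub_mem_latt ((hf x).1 hx) ((hf 0).1 zero_mem_latt)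

lemma Int.cases_of_sq_add_sq_add_sq_eq_one {a b c : ℤ} (h : a ^ 2 + b ^ 2 + c ^ 2 = 1) :
    (a = 0 ∧ b = 0 ∧ (c = 1 ∨ c = -1)) ∨ (a = 0 ∧ c = 0 ∧ (b = 1 ∨ b = -1)) ∨
      (b = 0 ∧ c = 0 ∧ (a = 1 ∨ a = -1)) := by
  have ha : a ^ 2 ≤ 1 := by nlinarith
  have hb : b ^ 2 ≤ 1 := by nlinarith
  have hc : c ^ 2 ≤ 1 := by nlinarith
  rw [sq_le_one_iff_abs_le_one, abs_le] at ha hb hc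
  obtain ⟨ha₁, ha₂⟩ := ha
  obtain ⟨hb₁, hb₂⟩ := hb
  obtain ⟨hc₁, hc₂⟩ := hc
  interval_cases a <;> interval_cases b <;> interval_cases c <;> simp_all

lemma exists_eq_smul_single_of_mem_latt_of_norm_eq_one {x : E3} (hx : x ∈ latt)
    (h : ‖x‖ = 1) :
    ∃ j : Fin 3, ∃ ε : ℝ, (ε = 1 ∨ ε = -1) ∧ x = ε • EuclideanSpace.single j 1 := by
  choose a ha using hx
  have hsum : a 0 ^ 2 + a 1 ^ 2 + a 2 ^ 2 = 1 := by
    have h2 := EuclideanSpace.norm_sq_eq x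
    simp only [h, Fin.sum_univ_three, Real.norm_eq_abs, sq_abs, ha] at h2
    exact_mod_cast h2.symm
  have hx : x = WithLp.toLp 2 ![(a 0 : ℝ), a 1, a 2] := by
    ext i; fin_cases i <;> simp [ha]
  rcases Int.cases_of_sq_add_sq_add_sq_eq_one hsum with
    ⟨h0, h1, h2⟩ | ⟨h0, h2, h1⟩ | ⟨h1, h2, h0⟩
  · refine ⟨2, a 2, by rcases h2 with h | h <;> simp [h], ?_⟩
    rw [hx]; ext i; fin_cases i <;> simp [h0, h1]
  · refine ⟨1, a 1, by rcases h1 with h | h <;> simp [h], ?_⟩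
    rw [hx]; ext i; fin_cases i <;> simp [h0, h2]
  · refine ⟨0, a 0, by rcases h0 with h | h <;> simp [h], ?_⟩
    rw [hx]; ext i; fin_cases i <;> simp [h1, h2]

lemma exists_signedPerm_of_mapsTo_latt {T : E3 ≃ₗᵢ[ℝ] E3} (hT : Set.MapsTo T latt latt) :
    ∃ (σ : Fin 3 → Fin 3) (ε : Fin 3 → ℝ), (∀ i, ε i = 1 ∨ ε i = -1) ∧
      ∀ i, T (EuclideanSpace.single i 1) = ε i • EuclideanSpace.single (σ i) 1 := by
  have h : ∀ i, ∃ j, ∃ ε : ℝ, (ε = 1 ∨ ε = -1) ∧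
      T (EuclideanSpace.single i 1) = ε • EuclideanSpace.single j 1 := fun i =>
    exists_eq_smul_single_of_mem_latt_of_norm_eq_one (hT (single_mem_latt i)) (by simp)
  choose σ ε hε hσ using h
  exact ⟨σ, ε, hε, hσ⟩

lemma EuclideanSpace.eq_and_eq_one_of_smul_single_eq_single {ι : Type*} [Fintype ι]
    [DecidableEq ι] {c : ℝ} {i j : ι}
    (h : c • EuclideanSpace.single j (1 : ℝ) = EuclideanSpace.single i 1) : j = i ∧ c = 1 := by
  have hi := congrArg (· i) h
  by_cases hji : j = i
  · subst hji
    simpa using hi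
  · simp [Ne.symm hji] at hi

section SignedPermutation

variable {T : E3 ≃ₗᵢ[ℝ] E3} {σ : Fin 3 → Fin 3} {ε : Fin 3 → ℝ}

lemma apply_eq_mul_apply_of_map_eq_self
    (hT : ∀ i, T (EuclideanSpace.single i 1) = ε i • EuclideanSpace.single (σ i) 1)
    {v : E3} (hv : T v = v) (i : Fin 3) : v i = ε i * v (σ i) :=
  calc v i = ⟪EuclideanSpace.single i 1, v⟫ := by simp [EuclideanSpace.inner_single_left]
    _ = ⟪T (EuclideanSpace.single i 1), T v⟫ := (T.inner_map_map _ _).symm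
    _ = ε i * v (σ i) := by
      rw [hT, hv, real_inner_smul_left, EuclideanSpace.inner_single_left]
      simp

lemma comp_comp_eq_self_and_mul_mul_eq_one_of_pow_three_eq_one
    (hT : ∀ i, T (EuclideanSpace.single i 1) = ε i • EuclideanSpace.single (σ i) 1)
    (h3 : T ^ 3 = 1) (i : Fin 3) : σ (σ (σ i)) = i ∧ ε i * ε (σ i) * ε (σ (σ i)) = 1 := by
  have h : (T ^ 3) (EuclideanSpace.single i 1) = EuclideanSpace.single i 1 := by simp [h3]
  simp only [pow_succ, pow_zero, one_mul, LinearIsometryEquiv.coe_mul, Function.comp_apply, hT,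
    LinearIsometryEquiv.map_smul, smul_smul] at h
  obtain ⟨hσ, hε⟩ := EuclideanSpace.eq_and_eq_one_of_smul_single_eq_single h
  exact ⟨hσ, hε⟩

lemma eq_one_of_pow_three_eq_one_of_forall_eq_self (hε : ∀ i, ε i = 1 ∨ ε i = -1)
    (hT : ∀ i, T (EuclideanSpace.single i 1) = ε i • EuclideanSpace.single (σ i) 1)
    (h3 : T ^ 3 = 1) (hσ : ∀ i, σ i = i) : T = 1 := by
  have hε1 : ∀ i, ε i = 1 := fun i => by
    have h := (comp_comp_eq_self_and_mul_mul_eq_one_of_pow_three_eq_one hT h3 i).2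
    rw [hσ, hσ] at h
    rcases hε i with hi | hi
    · exact hi
    · rw [hi] at h
      norm_num at h
  apply LinearIsometryEquiv.toLinearEquiv_injective
  refine (EuclideanSpace.basisFun (Fin 3) ℝ).toBasis.ext' fun i => ?_
  simp [hT, hε1, hσ]

end SignedPermutation

lemma Fin.eq_id_or_forall_mem_orbit_of_cube_eq_id (σ : Fin 3 → Fin 3)
    (h : ∀ i, σ (σ (σ i)) = i) : (∀ i, σ i = i) ∨ ∀ i j, j = i ∨ j = σ i ∨ j = σ (σ i) := by
  revert σ
  decide

lemma abs_apply_eq_of_mapsTo_latt {T : E3 ≃ₗᵢ[ℝ] E3} (hT : Set.MapsTo T latt latt)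
    (h3 : T ^ 3 = 1) (h1 : T ≠ 1) {v : E3} (hv : T v = v) (j : Fin 3) : |v j| = |v 0| := by
  obtain ⟨σ, ε, hε, hσ⟩ := exists_signedPerm_of_mapsTo_latt hT
  have habs : ∀ i, |v (σ i)| = |v i| := fun i => by
    rw [apply_eq_mul_apply_of_map_eq_self hσ hv i, abs_mul]
    rcases hε i with h | h <;> simp [h]
  have hσ3 i := (comp_comp_eq_self_and_mul_mul_eq_one_of_pow_three_eq_one hσ h3 i).1
  rcases Fin.eq_id_or_forall_mem_orbit_of_cube_eq_id σ hσ3 with hid | horb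
  · exact absurd (eq_one_of_pow_three_eq_one_of_forall_eq_self hε hσ h3 hid) h1
  · rcases horb 0 j with rfl | rfl | rfl <;> simp only [habs]

lemma IsRotationAbout.abs_apply_eq {r : E3 ≃ᵢ E3} {p v : E3} (hr : IsRotationAbout r p v 3)
    (hlat : Set.MapsTo r.toRealLinearIsometryEquiv latt latt) (j : Fin 3) : |v j| = |v 0| := by
  obtain ⟨-, hax, hord⟩ := hr
  have hp : r p = p := by simpa using hax 0
  have hr3 : r ^ 3 = 1 := by simpa [hord] using pow_orderOf_eq_one r
  have hT3 : r.toRealLinearIsometryEquiv ^ 3 = 1 := by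
    rw [← IsometryEquiv.toRealLinearIsometryEquivHom_apply, ← map_pow, hr3, map_one]
  have hT1 : r.toRealLinearIsometryEquiv ≠ 1 := fun h => by
    rw [IsometryEquiv.eq_one_of_toRealLinearIsometryEquiv_eq_one h hp, orderOf_one] at hord
    norm_num at hord
  exact abs_apply_eq_of_mapsTo_latt hlat hT3 hT1
    (IsometryEquiv.toRealLinearIsometryEquiv_apply_eq_self hp (by simpa using hax 1)) j

section Twist

variable {f : E3 ≃ᵢ E3} {p v w : E3} {n : ℕ}

lemma IsTwist.abs_apply_eq (ht : IsTwist f p v w 3) (hl : PreservesLatt f) (j : Fin 3) :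
    |v j| = |v 0| := by
  obtain ⟨-, -, -, r, hr, hfr, -⟩ := ht
  have hlat := hl.mapsTo_toRealLinearIsometryEquiv
  rw [IsometryEquiv.toRealLinearIsometryEquiv_eq_of_forall_apply_eq_add hfr] at hlat
  exact hr.abs_apply_eq hlat j

lemma PreservesLatt.pow_apply_mem {x : E3} (hl : PreservesLatt f) (hx : x ∈ latt) (k : ℕ) :
    (f ^ k) x ∈ latt := by
  induction k with
  | zero => exact hx
  | succ k ih => rw [pow_succ', IsometryEquiv.mul_apply]; exact (hl _).1 ih

lemma IsTwist.pow_apply (ht : IsTwist f p v w n) :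
    ∃ r : E3 ≃ᵢ E3, r ^ n = 1 ∧ ∀ (k : ℕ) (x : E3), (f ^ k) x = (r ^ k) x + k • w := by
  obtain ⟨-, -, -, r, ⟨-, -, hord⟩, hfr, hcomm⟩ := ht
  have hrw (k : ℕ) (x : E3) : (r ^ k) (x + w) = (r ^ k) x + w := by
    induction k generalizing x with
    | zero => rfl
    | succ k ih => rw [pow_succ', IsometryEquiv.mul_apply, ih, hcomm, IsometryEquiv.mul_apply]
  refine ⟨r, hord ▸ pow_orderOf_eq_one r, fun k => ?_⟩
  induction k with
  | zero => simp
  | succ k ih =>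
    intro x
    rw [pow_succ, IsometryEquiv.mul_apply, ih, hfr, hrw, pow_succ, IsometryEquiv.mul_apply,
      succ_nsmul]
    abel

lemma IsTwist.nsmul_mem_latt (ht : IsTwist f p v w n) (hl : PreservesLatt f) : n • w ∈ latt := by
  obtain ⟨r, hr, hf⟩ := ht.pow_apply
  simpa [hf, hr] using hl.pow_apply_mem zero_mem_latt n

lemma IsTwist.mem_latt_of_mem_axis (ht : IsTwist f p v w n) (hl : PreservesLatt f) {t : ℝ}
    (hq : p + t • v ∈ latt) : w ∈ latt := by
  obtain ⟨-, -, -, r, ⟨-, hax, -⟩, hfr, -⟩ := ht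
  simpa [hfr, hax] using sub_mem_latt ((hl _).1 hq) hq

end Twist

lemma norm_eq_sqrt_three_mul_abs {x : E3} (hx : ∀ j, |x j| = |x 0|) :
    ‖x‖ = √3 * |x 0| := by
  rw [EuclideanSpace.norm_eq, Fin.sum_univ_three]
  simp only [Real.norm_eq_abs, hx 1, hx 2]
  rw [show |x 0| ^ 2 + |x 0| ^ 2 + |x 0| ^ 2 = 3 * |x 0| ^ 2 by ring,
    Real.sqrt_mul zero_le_three, Real.sqrt_sq (abs_nonneg _)]

def signFlip (x : E3) : E3 ≃ₗᵢ[ℝ] E3 :=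
  LinearIsometryEquiv.piLpCongrRight 2 fun i =>
    if x i < 0 then LinearIsometryEquiv.neg ℝ else LinearIsometryEquiv.refl ℝ ℝ

lemma signFlip_apply (x y : E3) (i : Fin 3) :
    signFlip x y i = if x i < 0 then -y i else y i := by
  unfold signFlip
  split_ifs <;> simp [*]

lemma signFlip_self (x : E3) (i : Fin 3) : signFlip x x i = |x i| := by
  rw [signFlip_apply]
  split_ifs with h
  · exact (abs_of_neg h).symm
  · exact (abs_of_nonneg (not_lt.1 h)).symm

lemma preservesLatt_signFlip (x : E3) : PreservesLatt (signFlip x).toIsometryEquiv := by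
  intro y
  simp only [latt, Set.mem_ofPred_eq, LinearIsometryEquiv.coe_toIsometryEquiv, signFlip_apply]
  refine forall_congr' fun i => ?_
  split_ifs
  · exact ⟨fun ⟨n, hn⟩ => ⟨-n, by simp [hn]⟩, fun ⟨n, hn⟩ => ⟨-n, by simp [← hn]⟩⟩
  · rfl

/-- A 3-fold twist preserving the cubic tessellation has axis direction parallel to
`(1,1,1)` up to the point group, and the norm of its translational component lies in
`(√3/3)·ℤ`; if moreover the axis contains a vertex of ℤ³, the norm lies in `√3·ℤ`. -/
theorem stmt2 (f : E3 ≃ᵢ E3) (p v w : E3)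
    (hl : PreservesLatt f) (ht : IsTwist f p v w 3) :
    (∃ g : E3 ≃ᵢ E3, PreservesLatt g ∧ g 0 = 0 ∧ ∃ s : ℝ, s ≠ 0 ∧ g v = s • vec 1 1 1) ∧
    (∃ k : ℤ, ‖w‖ = k * (Real.sqrt 3 / 3)) ∧
    ((∃ q ∈ latt, ∃ t : ℝ, q = p + t • v) → ∃ k : ℤ, ‖w‖ = k * Real.sqrt 3) := by
  have hv := ht.abs_apply_eq hl
  obtain ⟨m, hm⟩ := ht.nsmul_mem_latt hl 0
  have haxis : ∀ t : ℝ, p + t • v ∈ latt → w ∈ latt := fun _ => ht.mem_latt_of_mem_axis hl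
  obtain ⟨-, -, ⟨s, rfl⟩, -, ⟨hv0, -⟩, -⟩ := ht
  have hw : ‖s • v‖ = √3 * |s * v 0| :=
    norm_eq_sqrt_three_mul_abs fun j => by simp [abs_mul, hv j]
  refine ⟨⟨(signFlip v).toIsometryEquiv, preservesLatt_signFlip v, by simp, |v 0|, ?_, ?_⟩,
    ⟨|m|, ?_⟩, ?_⟩
  · refine abs_ne_zero.2 fun h0 => hv0 ?_
    ext j
    simpa [h0] using hv j
  · ext i
    fin_cases i <;> simp [signFlip_self, hv, vec]
  · have hm' : s * v 0 = m / 3 := by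
      simp only [PiLp.smul_apply, smul_eq_mul, nsmul_eq_mul, Nat.cast_ofNat] at hm
      linarith
    rw [hw, hm', abs_div, Int.cast_abs, abs_of_pos (three_pos : (0 : ℝ) < 3)]
    ring
  · rintro ⟨q, hq, t, rfl⟩
    obtain ⟨k, hk⟩ := haxis t hq 0
    simp only [PiLp.smul_apply, smul_eq_mul] at hk
    exact ⟨|k|, by rw [hw, hk, Int.cast_abs, mul_comm]⟩
end
end

section
/- If σ is a 2-fold twist preserving the cubic tessellation of ℝ³ whose axis is parallel to a coordinate axis, then the norm of its translational component is a positive integer; if its axis is parallel to (1,1,0) (up to the point group action), then the norm of its translational component lies in (√2/2)·ℤ. -/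
noncomputable section
open scoped RealInnerProductSpace

/-! The rotation part of the twist fixes its axis pointwise, so it preserves inner products with
the axis direction; hence the component of `f 0` along the axis is exactly the translation `w`,
i.e. `‖w‖ * ‖u‖ = |⟪f 0, u⟫|` for every `u` parallel to the axis. As `f 0` is a lattice point, this
inner product is an integer when `u` is a unit coordinate vector. In the second case, `g` is linear
by Mazur–Ulam, so we may take `u = g⁻¹ (1,1,0)`: then `‖u‖ = √2` and `⟪f 0, u⟫ = ⟪g (f 0), (1,1,0)⟫`
is again an integer. -/

lemma Isometry.inner_apply_eq_of_fixes {F : Type*} [NormedAddCommGroup F] [InnerProductSpace ℝ F]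
    {r : F → F} (hr : Isometry r) {p v : F} (hp : r p = p) (hpv : r (p + v) = p + v) (x : F) :
    ⟪r x, v⟫ = ⟪x, v⟫ := by
  have h₁ : ‖r x - p‖ = ‖x - p‖ := by simpa [hp, dist_eq_norm] using hr.dist_eq x p
  have h₂ : ‖r x - p - v‖ = ‖x - p - v‖ := by
    simpa [hpv, dist_eq_norm, sub_sub] using hr.dist_eq x (p + v)
  have e₁ := norm_sub_sq_real (r x - p) v
  have e₂ := norm_sub_sq_real (x - p) v
  rw [h₁, h₂] at e₁
  simp only [inner_sub_left] at e₁ e₂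
  linarith

namespace IsTwist

variable {f : E3 ≃ᵢ E3} {p v w : E3} {n : ℕ}

lemma norm_mul_norm_eq_abs_inner (ht : IsTwist f p v w n) (s : ℝ) :
    ‖w‖ * ‖s • v‖ = |⟪f 0, s • v⟫| := by
  obtain ⟨-, -, ⟨c, rfl⟩, r, ⟨-, hfix, -⟩, hfr, -⟩ := ht
  have hr0 : ⟪r 0, s • v⟫ = 0 := by
    simpa using r.isometry.inner_apply_eq_of_fixes (by simpa using hfix 0) (hfix s) 0
  rw [hfr, inner_add_left, hr0, zero_add, real_inner_smul_left, real_inner_smul_right,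
    real_inner_self_eq_norm_sq, norm_smul, norm_smul, Real.norm_eq_abs, Real.norm_eq_abs,
    abs_mul, abs_mul, abs_of_nonneg (sq_nonneg ‖v‖)]
  ring

end IsTwist

lemma inner_vec_one_one_zero (q : E3) : ⟪q, vec 1 1 0⟫ = q 0 + q 1 := by
  simp [PiLp.inner_apply, vec, Fin.sum_univ_three]

lemma norm_vec_one_one_zero : ‖vec 1 1 0‖ = Real.sqrt 2 := by
  rw [EuclideanSpace.norm_eq]
  norm_num [vec, Fin.sum_univ_three, Matrix.cons_val_two]

/-- For a 2-fold twist preserving the cubic tessellation: if its axis is parallel to a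
coordinate axis, the norm of the translational component is a positive integer; if its
axis is parallel to `(1,1,0)` up to the point group, the norm lies in `(√2/2)·ℤ`. -/
theorem stmt4 (f : E3 ≃ᵢ E3) (p v w : E3)
    (hl : PreservesLatt f) (ht : IsTwist f p v w 2) :
    ((∃ (i : Fin 3) (s : ℝ), s ≠ 0 ∧ v = s • EuclideanSpace.single i (1:ℝ)) →
      ∃ k : ℕ, 0 < k ∧ ‖w‖ = (k : ℝ)) ∧
    ((∃ g : E3 ≃ᵢ E3, PreservesLatt g ∧ g 0 = 0 ∧ ∃ s : ℝ, s ≠ 0 ∧ g v = s • vec 1 1 0) →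
      ∃ k : ℤ, ‖w‖ = k * (Real.sqrt 2 / 2)) := by
  have hf0 : f 0 ∈ latt := (hl 0).mp fun i => ⟨0, by simp⟩
  constructor
  · rintro ⟨i, s, hs, rfl⟩
    obtain ⟨k, hk⟩ := hf0 i
    have hw : ‖w‖ = |(k : ℝ)| := by
      simpa [smul_smul, hs, EuclideanSpace.inner_single_right, hk] using
        ht.norm_mul_norm_eq_abs_inner s⁻¹
    refine ⟨k.natAbs, ?_, by rw [hw, Nat.cast_natAbs, Int.cast_abs]⟩
    have hk0 : (k : ℝ) ≠ 0 := abs_pos.mp (hw ▸ norm_pos_iff.mpr ht.2.1)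
    exact Int.natAbs_pos.mpr (by exact_mod_cast hk0)
  · rintro ⟨g, hg, hg0, s, hs, hgv⟩
    set L := g.toRealLinearIsometryEquivOfMapZero hg0
    have hLg : ⇑L = g := g.coe_toRealLinearIsometryEquivOfMapZero hg0
    have hLv : L (s⁻¹ • v) = vec 1 1 0 := by
      simp [L, hgv, smul_smul, hs]
    obtain ⟨a, ha⟩ := (hg (f 0)).mp hf0 0
    obtain ⟨b, hb⟩ := (hg (f 0)).mp hf0 1
    have hw := ht.norm_mul_norm_eq_abs_inner s⁻¹
    rw [← L.norm_map (s⁻¹ • v), ← L.inner_map_map, hLv, norm_vec_one_one_zero,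
      inner_vec_one_one_zero, hLg, ha, hb] at hw
    refine ⟨|a + b|, ?_⟩
    rw [Int.cast_abs, Int.cast_add, ← hw, mul_assoc, mul_div_assoc', Real.mul_self_sqrt zero_le_two,
      div_self two_ne_zero, mul_one]
end
end

section
/- Let τ₁, τ₂, τ₃, τ₄ be four half-turn twists of ℝ³ whose axes are pairwise parallel (all in the same direction v), whose translational components all equal v, and whose axes project orthogonally to the four vertices of a parallelogram in a plane perpendicular to v. Then τ₄ lies in the group generated by τ₁, τ₂, τ₃; in particular the group ⟨τ₁, τ₂, τ₃, τ₄⟩ is generated by three of the twists. -/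
noncomputable section
open scoped RealInnerProductSpace

/-- The half-turn twist about the line through `p` with direction `v` and translational
component `v`: rotation by π about the line composed with translation by `v`. -/
def screw (p v : E3) : E3 → E3 :=
  fun x => (2:ℝ) • (p + (⟪x - p, v⟫ / ⟪v, v⟫) • v) - x + v

lemma screw_alg (v : E3) (hvv : ⟪v,v⟫ ≠ (0:ℝ)) (p q x : E3) (h : ⟪q, v⟫ = ⟪p, v⟫) :
    screw q v (screw p v x - (2:ℝ)•v) = x + (2:ℝ)•(q - p) := by
  have e1 : ⟪(screw p v x - (2:ℝ)•v) - q, v⟫ = ⟪x - p, v⟫ - ⟪v, v⟫ := by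
    simp only [screw, inner_sub_left, inner_add_left, real_inner_smul_left,
      div_mul_cancel₀ _ hvv, h]
    ring
  show (2:ℝ) • (q + (⟪(screw p v x - (2:ℝ)•v) - q, v⟫ / ⟪v, v⟫) • v)
      - (screw p v x - (2:ℝ)•v) + v = x + (2:ℝ)•(q - p)
  rw [e1, sub_div, div_self hvv]
  simp only [screw]
  module

lemma screw_shift (v p q x : E3) (h : ⟪q, v⟫ = ⟪p, v⟫) :
    screw q v x = screw p v x + (2:ℝ)•(q - p) := by
  have e : ⟪x - q, v⟫ = ⟪x - p, v⟫ := by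
    simp only [inner_sub_left, h]
  simp only [screw, e]
  module

/-- If four half-turn twists have parallel axes projecting to the four vertices of a
parallelogram in a plane perpendicular to the common direction `v`, and translational
components all equal to `v`, then the fourth is in the group generated by the other three. -/
theorem stmt6 (v : E3) (hv : v ≠ 0) (q1 q2 q3 q4 : E3)
    (hperp2 : ⟪q2 - q1, v⟫ = 0) (hperp3 : ⟪q3 - q1, v⟫ = 0)
    (hpar : q4 = q2 + q3 - q1)
    (t1 t2 t3 t4 : E3 ≃ᵢ E3)
    (h1 : ∀ x, t1 x = screw q1 v x) (h2 : ∀ x, t2 x = screw q2 v x)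
    (h3 : ∀ x, t3 x = screw q3 v x) (h4 : ∀ x, t4 x = screw q4 v x) :
    t4 ∈ Subgroup.closure ({t1, t2, t3} : Set (E3 ≃ᵢ E3)) := by
  have hvv : ⟪v, v⟫ ≠ (0:ℝ) := fun h => hv (inner_self_eq_zero.mp h)
  have hq2 : ⟪q2, v⟫ = ⟪q1, v⟫ := by
    rw [inner_sub_left] at hperp2; linarith
  have hq4 : ⟪q4, v⟫ = ⟪q3, v⟫ := by
    rw [hpar, inner_sub_left, inner_add_left]
    rw [inner_sub_left] at hperp2; linarith
  have hsymm : ∀ y, t1.symm y = t1 y - (2:ℝ)•v := by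
    intro y
    apply t1.injective
    rw [t1.apply_symm_apply, h1, h1]
    rw [screw_alg v hvv q1 q1 y rfl]
    simp
  have key : t4 = t2 * t1⁻¹ * t3 := by
    refine IsometryEquiv.ext fun x => ?_
    show t4 x = t2 (t1.symm (t3 x))
    rw [hsymm, h1, h2, h3, h4, screw_alg v hvv q1 q2 _ hq2,
      screw_shift v q3 q4 x hq4, hpar]
    module
  rw [key]
  exact mul_mem (mul_mem (Subgroup.subset_closure (by simp))
    (inv_mem (Subgroup.subset_closure (by simp)))) (Subgroup.subset_closure (by simp))
end
end

section
/- The group 𝒟ℐ generated by half-turn twists of ℝ³ with parallel axes positioned at the vertices of a parallelogram (all with equal translational component along the axis direction) acts freely on ℝ³: no nontrivial element of 𝒟ℐ has a fixed point. -/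
noncomputable section
open scoped RealInnerProductSpace

noncomputable def Rv (v x : E3) : E3 := (2 * (⟪x, v⟫ / ⟪v, v⟫)) • v - x

lemma inner_vv_ne (v : E3) (hv : v ≠ 0) : ⟪v, v⟫ ≠ 0 := by
  simpa using (inner_self_ne_zero (𝕜 := ℝ)).mpr hv

lemma Rv_add (v x y : E3) : Rv v (x + y) = Rv v x + Rv v y := by
  simp only [Rv, inner_add_left, add_div, mul_add, add_smul]
  abel

lemma inner_Rv (v : E3) (hv : v ≠ 0) (x : E3) : ⟪Rv v x, v⟫ = ⟪x, v⟫ := by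
  simp only [Rv, inner_sub_left, real_inner_smul_left]
  rw [mul_assoc, div_mul_cancel₀ _ (inner_vv_ne v hv)]
  ring

lemma Rv_Rv (v : E3) (hv : v ≠ 0) (x : E3) : Rv v (Rv v x) = x := by
  have h := inner_Rv v hv x
  rw [Rv, h, Rv]
  abel

lemma screw_eq (p v x : E3) :
    screw p v x = Rv v x + ((2:ℝ) • p - (2 * (⟪p, v⟫ / ⟪v, v⟫)) • v + v) := by
  simp only [screw, Rv, inner_sub_left, sub_div, mul_sub, sub_smul, smul_add]
  module

lemma inner_cp (p v : E3) (hv : v ≠ 0) :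
    ⟪(2:ℝ) • p - (2 * (⟪p, v⟫ / ⟪v, v⟫)) • v + v, v⟫ = ⟪v, v⟫ := by
  simp only [inner_add_left, inner_sub_left, real_inner_smul_left]
  rw [mul_assoc, div_mul_cancel₀ _ (inner_vv_ne v hv)]
  ring

/-- Normal form invariant: each element of the group is either a translation whose
translational part has even `v`-component, or `Rv` composed with a translation with odd
`v`-component. -/
def NF (v : E3) (g : E3 ≃ᵢ E3) : Prop :=
  (∃ c : E3, (∀ x, g x = x + c) ∧ ∃ m : ℤ, Even m ∧ ⟪c, v⟫ = m * ⟪v, v⟫) ∨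
  (∃ c : E3, (∀ x, g x = Rv v x + c) ∧ ∃ m : ℤ, Odd m ∧ ⟪c, v⟫ = m * ⟪v, v⟫)

lemma NF_screw (v : E3) (hv : v ≠ 0) (p : E3) (t : E3 ≃ᵢ E3)
    (ht : ∀ x, t x = screw p v x) : NF v t := by
  right
  refine ⟨(2:ℝ) • p - (2 * (⟪p, v⟫ / ⟪v, v⟫)) • v + v, fun x => ?_, 1, odd_one, ?_⟩
  · rw [ht, screw_eq]
  · rw [inner_cp p v hv]; push_cast; ring

lemma NF_one (v : E3) : NF v 1 := by
  left
  exact ⟨0, fun x => by simp, 0, Even.zero, by simp⟩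

lemma NF_mul (v : E3) (hv : v ≠ 0) (g h : E3 ≃ᵢ E3) (hg : NF v g) (hh : NF v h) :
    NF v (g * h) := by
  have gmul : ∀ x, (g * h) x = g (h x) := fun x => rfl
  rcases hg with ⟨c, hc, m, hm, hcv⟩ | ⟨c, hc, m, hm, hcv⟩ <;>
    rcases hh with ⟨d, hd, k, hk, hdv⟩ | ⟨d, hd, k, hk, hdv⟩
  · left
    refine ⟨d + c, fun x => by rw [gmul, hd, hc, add_assoc], m + k, Even.add hm hk, ?_⟩
    rw [inner_add_left, hcv, hdv]; push_cast; ring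
  · right
    refine ⟨d + c, fun x => by rw [gmul, hd, hc, add_assoc], m + k, ?_, ?_⟩
    · exact hm.add_odd hk
    · rw [inner_add_left, hcv, hdv]; push_cast; ring
  · right
    refine ⟨Rv v d + c, fun x => by rw [gmul, hd, hc, Rv_add, add_assoc], m + k, ?_, ?_⟩
    · exact hm.add_even hk
    · rw [inner_add_left, hcv, inner_Rv v hv, hdv]; push_cast; ring
  · left
    refine ⟨Rv v d + c, fun x => by rw [gmul, hd, hc, Rv_add, Rv_Rv v hv, add_assoc],
      m + k, hm.add_odd hk, ?_⟩
    rw [inner_add_left, hcv, inner_Rv v hv, hdv]; push_cast; ring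

lemma NF_inv (v : E3) (hv : v ≠ 0) (g : E3 ≃ᵢ E3) (hg : NF v g) : NF v g⁻¹ := by
  have key : ∀ y x : E3, g x = y → g⁻¹ y = x := by
    intro y x hxy
    have : g⁻¹ (g x) = x := g.symm_apply_apply x
    rwa [hxy] at this
  rcases hg with ⟨c, hc, m, hm, hcv⟩ | ⟨c, hc, m, hm, hcv⟩
  · left
    refine ⟨-c, fun y => key y (y + -c) (by rw [hc]; abel), -m, hm.neg, ?_⟩
    rw [inner_neg_left, hcv]; push_cast; ring
  · right
    refine ⟨-Rv v c, fun y => key y (Rv v y + -Rv v c) ?_, -m, hm.neg, ?_⟩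
    · rw [hc, Rv_add, Rv_Rv v hv]
      have : Rv v (-Rv v c) = -Rv v (Rv v c) := by
        have := Rv_add v (Rv v c) (-Rv v c)
        simp only [add_neg_cancel] at this
        have h0 : Rv v 0 = 0 := by simp [Rv]
        rw [h0] at this
        linear_combination (norm := abel) -this
      rw [this, Rv_Rv v hv]
      abel
    · rw [inner_neg_left, inner_Rv v hv, hcv]; push_cast; ring

/-- The group 𝒟ℐ generated by four half-turn twists with parallel axes at the vertices of a
nondegenerate parallelogram (in a plane perpendicular to the common direction `v`), all
with translational component `v`, acts freely on ℝ³. -/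
theorem stmt8 (v : E3) (hv : v ≠ 0) (q1 q2 q3 q4 : E3)
    (hperp2 : ⟪q2 - q1, v⟫ = 0) (hperp3 : ⟪q3 - q1, v⟫ = 0)
    (hpar : q4 = q2 + q3 - q1)
    (hnd : LinearIndependent ℝ ![q2 - q1, q3 - q1])
    (t1 t2 t3 t4 : E3 ≃ᵢ E3)
    (h1 : ∀ x, t1 x = screw q1 v x) (h2 : ∀ x, t2 x = screw q2 v x)
    (h3 : ∀ x, t3 x = screw q3 v x) (h4 : ∀ x, t4 x = screw q4 v x) :
    ∀ g ∈ Subgroup.closure ({t1, t2, t3, t4} : Set (E3 ≃ᵢ E3)), g ≠ 1 → ∀ x : E3, g x ≠ x := by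
  intro g hg
  have hNF : NF v g := by
    refine Subgroup.closure_induction (p := fun g _ => NF v g) ?_ (NF_one v)
      (fun a b _ _ ha hb => NF_mul v hv a b ha hb) (fun a _ ha => NF_inv v hv a ha) hg
    intro t ht
    simp only [Set.mem_insert_iff, Set.mem_singleton_iff] at ht
    rcases ht with rfl | rfl | rfl | rfl
    · exact NF_screw v hv q1 _ h1
    · exact NF_screw v hv q2 _ h2
    · exact NF_screw v hv q3 _ h3
    · exact NF_screw v hv q4 _ h4
  intro hne x hfix
  rcases hNF with ⟨c, hc, m, hm, hcv⟩ | ⟨c, hc, m, hm, hcv⟩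
  · have hc0 : c = 0 := by
      have := hc x
      rw [hfix] at this
      exact (left_eq_add.mp this)
    exact hne (by
      ext y
      rw [hc, hc0, add_zero]
      rfl)
  · have h1' : ⟪x - Rv v x, v⟫ = 0 := by
      rw [inner_sub_left, inner_Rv v hv]; ring
    have hcx : c = x - Rv v x := by
      have := hc x
      rw [hfix] at this
      linear_combination (norm := abel) -this
    rw [hcx, h1'] at hcv
    have hm0 : (m : ℝ) = 0 := by
      rcases mul_eq_zero.mp hcv.symm with h | h
      · exact h
      · exact absurd h (inner_vv_ne v hv)
    have : m = 0 := by exact_mod_cast hm0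
    rw [this] at hm
    exact (Int.not_even_iff_odd.mpr hm) Even.zero
end
end

section
/- With 𝒯ℰ = ⟨σ₁, σ₂⟩ as above (σ₁ a 4-fold twist about the z-axis with translational component (0,0,c), σ₂ a half-turn twist about the vertical line through (p,q,0) with translational component (0,0,2c)), the intersection of 𝒯ℰ with the group of all translations of ℝ³ is the lattice generated by the three vectors (0,0,4c), (2p,2q,0), and (2q,−2p,0). -/
noncomputable section
open scoped RealInnerProductSpace

/-- The 4-fold twist about the vertical line through `(p,q,0)` with translational
component `(0,0,c)`: rotation by π/2 about the line composed with translation by `(0,0,c)`. -/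
def fourTwist (p q c : ℝ) : E3 → E3 :=
  fun x => vec (p + (x 1 - q)) (q - (x 0 - p)) (x 2 + c)

/-- The half-turn twist about the vertical line through `(p,q,0)` with translational
component `(0,0,c)`. -/
def halfTwistV (p q c : ℝ) : E3 → E3 :=
  fun x => vec (2 * p - x 0) (2 * q - x 1) (x 2 + c)

/-- The translation of ℝ³ by the vector `w`, as an isometry. -/
def transl (w : E3) : E3 ≃ᵢ E3 :=
  ⟨Equiv.addRight w, Isometry.of_dist_eq fun a b => by simp⟩

/-- The group of all translations of ℝ³. -/
def TransGrp : Subgroup (E3 ≃ᵢ E3) where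
  carrier := {f | ∃ w : E3, ∀ x, f x = x + w}
  one_mem' := ⟨0, fun x => by simp⟩
  mul_mem' := by
    rintro f g ⟨w, hw⟩ ⟨u, hu⟩
    exact ⟨u + w, fun x => by
      show f (g x) = x + (u + w)
      rw [hu, hw, add_assoc]⟩
  inv_mem' := by
    rintro f ⟨w, hw⟩
    refine ⟨-w, fun x => ?_⟩
    show f.symm x = x + -w
    rw [IsometryEquiv.symm_apply_eq, hw]
    abel

/-! The quarter turn `R` about the `z`-axis satisfies `σ₁ x = R x + (0,0,c)` and
`σ₂ = τ ∘ σ₁²` with `τ` the translation by `(2p,2q,0)`, so every element of `⟨σ₁,σ₂⟩` has the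
form `x ↦ Rᵏ x + k • (0,0,c) + v` with `v` in the `R`-invariant lattice `L` spanned by the three
vectors; such maps form a group. One of them is a translation only if `Rᵏ = 1`, i.e. `4 ∣ k`,
and then its vector lies in `L` because `(0,0,4c) ∈ L`. Conversely `σ₁⁴`, `σ₂σ₁⁻²` and the
conjugate of the latter by `σ₁` are the translations by the three generators of `L`. -/

section ScrewGroup

variable {V : Type*} [NormedAddCommGroup V] [NormedSpace ℝ V] (R : V ≃ₗ[ℝ] V)

lemma zpow_apply_mem_iff {P : Set V} (hP : ∀ v, R v ∈ P ↔ v ∈ P) (k : ℤ) (v : V) :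
    (R ^ k) v ∈ P ↔ v ∈ P := by
  induction k using Int.induction_on generalizing v with
  | zero => rfl
  | succ k ih => rw [zpow_add_one, LinearEquiv.mul_apply, ih, hP]
  | pred k ih =>
    rw [zpow_sub_one, LinearEquiv.mul_apply, ih, ← hP]
    exact Iff.of_eq (congrArg (· ∈ P) (R.apply_symm_apply v))

lemma zpow_apply_of_apply_eq {u : V} (hu : R u = u) (k : ℤ) : (R ^ k) u = u :=
  zpow_mem (show R ∈ MulAction.stabilizer (V ≃ₗ[ℝ] V) u from hu) k

variable {R} {u : V} {L : AddSubgroup V}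

def screwGroup (hu : R u = u) (hL : ∀ v, R v ∈ L ↔ v ∈ L) : Subgroup (V ≃ᵢ V) where
  carrier := {f | ∃ k : ℤ, ∃ v ∈ L, ∀ x, f x = (R ^ k) x + (k • u + v)}
  one_mem' := ⟨0, 0, zero_mem L, fun x => by simp⟩
  mul_mem' := by
    rintro f g ⟨k, v, hv, hf⟩ ⟨l, w, hw, hg⟩
    refine ⟨k + l, (R ^ k) w + v, add_mem ((zpow_apply_mem_iff R hL k w).2 hw) hv, fun x => ?_⟩
    rw [IsometryEquiv.mul_apply, hg, hf, zpow_add, LinearEquiv.mul_apply, map_add, map_add,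
      map_zsmul, zpow_apply_of_apply_eq R hu, add_zsmul]
    abel
  inv_mem' := by
    rintro f ⟨k, v, hv, hf⟩
    refine ⟨-k, -(R ^ (-k)) v, neg_mem ((zpow_apply_mem_iff R hL (-k) v).2 hv), fun x => ?_⟩
    refine f.symm_apply_eq.2 ?_
    rw [hf, map_add, map_add, map_neg, map_zsmul,
      zpow_apply_of_apply_eq R hu, ← LinearEquiv.mul_apply, ← LinearEquiv.mul_apply, ← zpow_add,
      add_neg_cancel, zpow_zero]
    simp only [LinearEquiv.coe_one, id, neg_zsmul]
    abel

lemma mem_of_translation_mem_screwGroup {hu : R u = u} {hL : ∀ v, R v ∈ L ↔ v ∈ L}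
    (hRu : (orderOf R : ℤ) • u ∈ L) {f : V ≃ᵢ V} (hf : f ∈ screwGroup hu hL) {w : V}
    (hw : ∀ x, f x = x + w) : w ∈ L := by
  obtain ⟨k, v, hv, hfk⟩ := hf
  have hw0 : w = k • u + v := by simpa using (hw 0).symm.trans (hfk 0)
  have hRk : R ^ k = 1 := by
    ext x
    have := (hw x).symm.trans (hfk x)
    rw [hw0] at this
    simpa using (add_right_cancel this).symm
  obtain ⟨j, rfl⟩ := orderOf_dvd_iff_zpow_eq_one.2 hRk
  rw [hw0, mul_comm, mul_zsmul]
  exact add_mem (zsmul_mem hRu j) hv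

end ScrewGroup

lemma neg_vec (a b c : ℝ) : -vec a b c = vec (-a) (-b) (-c) := by
  ext i; fin_cases i <;> simp [vec]

def rot : E3 ≃ₗ[ℝ] E3 where
  toFun x := vec (x 1) (-x 0) (x 2)
  invFun x := vec (-x 1) (x 0) (x 2)
  map_add' x y := by ext i; fin_cases i <;> simp [vec]; ring
  map_smul' a x := by ext i; fin_cases i <;> simp [vec]
  left_inv x := by ext i; fin_cases i <;> simp [vec]
  right_inv x := by ext i; fin_cases i <;> simp [vec]

@[simp] lemma rot_vec (a b c : ℝ) : rot (vec a b c) = vec b (-a) c := rfl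

lemma rot_pow_four : rot ^ 4 = 1 := by
  ext x i; fin_cases i <;> simp [pow_succ, rot, vec]

lemma orderOf_rot : orderOf rot = 4 := by
  refine orderOf_eq_prime_pow (p := 2) (n := 1) (fun h => ?_) rot_pow_four
  have := congrArg (fun f : E3 ≃ₗ[ℝ] E3 => f (vec 1 0 0) 0) h
  simp only [pow_one, pow_two, LinearEquiv.mul_apply, rot_vec, LinearEquiv.coe_one, id] at this
  norm_num [vec] at this

def twistGens (p q c : ℝ) : Set E3 :=
  {vec 0 0 (4 * c), vec (2 * p) (2 * q) 0, vec (2 * q) (-(2 * p)) 0}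

def twistLattice (p q c : ℝ) : AddSubgroup E3 :=
  AddSubgroup.closure (twistGens p q c)

lemma rot_mem_twistLattice {p q c : ℝ} {v : E3} (hv : v ∈ twistLattice p q c) :
    rot v ∈ twistLattice p q c := by
  refine (AddSubgroup.closure_le
    ((twistLattice p q c).comap rot.toLinearMap.toAddMonoidHom)).2 ?_ hv
  have hgen {w : E3} (hw : w ∈ twistGens p q c) : w ∈ twistLattice p q c :=
    AddSubgroup.subset_closure hw
  rintro _ (rfl | rfl | rfl)
  · exact hgen (by simp [twistGens])
  · exact hgen (by simp [twistGens])
  · simpa [neg_vec] using neg_mem (hgen (Or.inr (Or.inl rfl)))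

lemma rot_mem_twistLattice_iff (p q c : ℝ) (v : E3) :
    rot v ∈ twistLattice p q c ↔ v ∈ twistLattice p q c := by
  refine ⟨fun h => ?_, rot_mem_twistLattice⟩
  have hv : rot (rot (rot (rot v))) = v := by
    simpa [pow_succ] using congrArg (· v) rot_pow_four
  exact hv ▸ rot_mem_twistLattice (rot_mem_twistLattice (rot_mem_twistLattice h))

lemma rot_vec_zero_zero (c : ℝ) : rot (vec 0 0 c) = vec 0 0 c := by
  simp

lemma orderOf_rot_zsmul_mem_twistLattice (p q c : ℝ) :
    (orderOf rot : ℤ) • vec 0 0 c ∈ twistLattice p q c := by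
  rw [orderOf_rot]
  exact AddSubgroup.subset_closure (by left; ext i; fin_cases i <;> simp [vec])

lemma transl_add (v w : E3) : transl (v + w) = transl v * transl w :=
  IsometryEquiv.ext fun x => by change x + (v + w) = x + w + v; abel

lemma transl_zero : transl 0 = 1 :=
  IsometryEquiv.ext fun x => add_zero x

lemma transl_neg (w : E3) : transl (-w) = (transl w)⁻¹ :=
  eq_inv_of_mul_eq_one_left (by rw [← transl_add, neg_add_cancel, transl_zero])

lemma transl_mem_closure_image {S : Set E3} {w : E3} (hw : w ∈ AddSubgroup.closure S) :
    transl w ∈ Subgroup.closure (transl '' S) := by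
  induction hw using AddSubgroup.closure_induction with
  | mem x hx => exact Subgroup.subset_closure ⟨x, hx, rfl⟩
  | zero => rw [transl_zero]; exact one_mem _
  | add x y _ _ hx hy => rw [transl_add]; exact mul_mem hx hy
  | neg x _ hx => rw [transl_neg]; exact inv_mem hx

lemma conj_transl {s : E3 ≃ᵢ E3} {R : E3 ≃ₗ[ℝ] E3} {t : E3} (hs : ∀ x, s x = R x + t) (w : E3) :
    s * transl w * s⁻¹ = transl (R w) := by
  ext1 y
  change s (s⁻¹ y + w) = y + R w
  rw [hs, map_add, add_right_comm, ← hs, IsometryEquiv.apply_inv_self]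

lemma fourTwist_zero_zero_apply (c : ℝ) (x : E3) : fourTwist 0 0 c x = rot x + vec 0 0 c := by
  ext i; fin_cases i <;> simp [fourTwist, rot, vec]

lemma halfTwistV_eq_transl_mul {p q c : ℝ} {s : E3 ≃ᵢ E3} (hs : ∀ x, s x = rot x + vec 0 0 c)
    {s' : E3 ≃ᵢ E3} (hs' : ∀ x, s' x = halfTwistV p q (2 * c) x) :
    s' = transl (vec (2 * p) (2 * q) 0) * s ^ 2 := by
  ext1 x
  rw [hs', pow_two, IsometryEquiv.mul_apply, IsometryEquiv.mul_apply, hs, hs]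
  ext i; fin_cases i <;> simp [halfTwistV, rot, vec, transl] <;> ring

lemma pow_four_eq_transl {c : ℝ} {s : E3 ≃ᵢ E3} (hs : ∀ x, s x = rot x + vec 0 0 c) :
    s ^ 4 = transl (vec 0 0 (4 * c)) := by
  ext1 x
  simp only [pow_succ, pow_zero, one_mul, IsometryEquiv.mul_apply, hs]
  ext i; fin_cases i <;> simp [rot, vec, transl]; ring

lemma image_transl_twistGens (p q c : ℝ) :
    transl '' twistGens p q c = {transl (vec 0 0 (4 * c)), transl (vec (2 * p) (2 * q) 0),
      transl (vec (2 * q) (-(2 * p)) 0)} := by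
  simp [twistGens, Set.image_insert_eq]

section Generators

variable {p q c : ℝ} {s1 s2 : E3 ≃ᵢ E3}

lemma closure_le_screwGroup (hs1 : ∀ x, s1 x = rot x + vec 0 0 c)
    (hs2 : s2 = transl (vec (2 * p) (2 * q) 0) * s1 ^ 2) :
    Subgroup.closure {s1, s2} ≤
      screwGroup (rot_vec_zero_zero c) (rot_mem_twistLattice_iff p q c) := by
  have hs1S : s1 ∈ screwGroup (rot_vec_zero_zero c) (rot_mem_twistLattice_iff p q c) :=
    ⟨1, 0, zero_mem _, by simpa using hs1⟩
  rw [Subgroup.closure_le]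
  rintro _ (rfl | rfl)
  · exact hs1S
  · rw [hs2]
    exact mul_mem ⟨0, vec (2 * p) (2 * q) 0, AddSubgroup.subset_closure (by simp [twistGens]),
      fun x => by simp [transl]⟩ (pow_mem hs1S 2)

lemma transl_mem_closure_pair (hs1 : ∀ x, s1 x = rot x + vec 0 0 c)
    (hs2 : s2 = transl (vec (2 * p) (2 * q) 0) * s1 ^ 2) {w : E3} (hw : w ∈ twistGens p q c) :
    transl w ∈ Subgroup.closure {s1, s2} := by
  have hs1C : s1 ∈ Subgroup.closure {s1, s2} := Subgroup.subset_closure (by simp)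
  have hs2C : s2 ∈ Subgroup.closure {s1, s2} := Subgroup.subset_closure (by simp)
  have h2p : transl (vec (2 * p) (2 * q) 0) ∈ Subgroup.closure {s1, s2} := by
    rw [eq_mul_inv_iff_mul_eq.2 hs2.symm]
    exact mul_mem hs2C (inv_mem (pow_mem hs1C 2))
  rcases hw with rfl | rfl | rfl
  · rw [← pow_four_eq_transl hs1]
    exact pow_mem hs1C 4
  · exact h2p
  · rw [← rot_vec, ← conj_transl hs1]
    exact mul_mem (mul_mem hs1C h2p) (inv_mem hs1C)

end Generators

theorem stmt15_general (c : ℤ) (p q : ℝ)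
    (s1 s2 : E3 ≃ᵢ E3)
    (h1 : ∀ x, s1 x = fourTwist 0 0 (c : ℝ) x)
    (h2 : ∀ x, s2 x = halfTwistV p q (2 * (c : ℝ)) x) :
    Subgroup.closure ({s1, s2} : Set (E3 ≃ᵢ E3)) ⊓ TransGrp
      = Subgroup.closure ({transl (vec 0 0 (4 * (c:ℝ))), transl (vec (2*p) (2*q) 0),
          transl (vec (2*q) (-(2*p)) 0)} : Set (E3 ≃ᵢ E3)) := by
  have hs1 (x : E3) : s1 x = rot x + vec 0 0 c := (h1 x).trans (fourTwist_zero_zero_apply _ x)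
  have hs2 := halfTwistV_eq_transl_mul hs1 h2
  rw [← image_transl_twistGens]
  apply le_antisymm
  · rintro f ⟨hf, w, hw⟩
    obtain rfl : f = transl w := IsometryEquiv.ext hw
    exact transl_mem_closure_image <| mem_of_translation_mem_screwGroup
      (orderOf_rot_zsmul_mem_twistLattice p q c) (closure_le_screwGroup hs1 hs2 hf) hw
  · rw [Subgroup.closure_le]
    rintro _ ⟨w, hw, rfl⟩
    exact Subgroup.mem_inf.2 ⟨transl_mem_closure_pair hs1 hs2 hw, w, fun _ => rfl⟩

/-- The intersection of 𝒯ℰ = ⟨σ₁,σ₂⟩ with the group of all translations of ℝ³ is the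
lattice generated by the translations by `(0,0,4c)`, `(2p,2q,0)` and `(2q,−2p,0)`. -/
theorem stmt15 (c : ℤ) (hc : 0 < c) (p q : ℝ) (hpq : ¬(p = 0 ∧ q = 0))
    (hp : ∃ k : ℤ, p = (k : ℝ) / 2) (hq : ∃ k : ℤ, q = (k : ℝ) / 2)
    (s1 s2 : E3 ≃ᵢ E3)
    (h1 : ∀ x, s1 x = fourTwist 0 0 (c : ℝ) x)
    (h2 : ∀ x, s2 x = halfTwistV p q (2 * (c : ℝ)) x) :
    Subgroup.closure ({s1, s2} : Set (E3 ≃ᵢ E3)) ⊓ TransGrp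
      = Subgroup.closure ({transl (vec 0 0 (4 * (c:ℝ))), transl (vec (2*p) (2*q) 0),
          transl (vec (2*q) (-(2*p)) 0)} : Set (E3 ≃ᵢ E3)) :=
  stmt15_general c p q s1 s2 h1 h2
end
end

section
/- Let σ₁ be the half-turn twist about the z-axis with translational component (0,0,c), and σ₂, σ₃ half-turn twists with vertical axes through (p₂,0,0) and (p₃,q₃,0) respectively and the same translational component (0,0,c), where c ∈ ℤ, c > 0, p₂ > 0, q₃ > 0. Let 𝒟ℐ = ⟨σ₁,σ₂,σ₃⟩. Then the covolume of 𝒟ℐ (number of unit cubes in a fundamental region) equals 4·c·q₃·p₂. -/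
noncomputable section
open scoped RealInnerProductSpace

instance : MulAction (E3 ≃ᵢ E3) E3 where
  smul f x := f x
  one_smul _ := rfl
  mul_smul _ _ _ := rfl

/-!
Every element of `⟨σ₁, σ₂, σ₃⟩` has the normal form
`x ↦ (ε x₀ + 2a p₂ + 2b p₃, ε x₁ + 2b q₃, x₂ + n c)` with `ε = (-1)ⁿ`, and every such map lies in
the group, because `σ₂σ₁⁻¹` and `σ₃σ₁⁻¹` are the translations by `(2p₂, 0, 0)` and `(2p₃, 2q₃, 0)`.
Reducing first `x₂` modulo `c`, then `x₁` modulo `2q₃`, then `x₀` modulo `2p₂` shows that the box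
`[0, 2p₂) × [0, 2q₃) × [0, c)` is a fundamental domain, of volume `4 c q₃ p₂`.
-/

open MeasureTheory Set

@[simp] lemma vec_apply_zero (x y z : ℝ) : vec x y z 0 = x := rfl
@[simp] lemma vec_apply_one (x y z : ℝ) : vec x y z 1 = y := rfl
@[simp] lemma vec_apply_two (x y z : ℝ) : vec x y z 2 = z := rfl

theorem IsometryEquiv.measurePreserving_volume {V : Type*} [NormedAddCommGroup V]
    [InnerProductSpace ℝ V] [FiniteDimensional ℝ V] [MeasurableSpace V] [BorelSpace V]
    (f : V ≃ᵢ V) : MeasurePreserving f := by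
  simpa only [InnerProductSpace.euclideanHausdorffMeasure_eq_volume]
    using f.measurePreserving_euclideanHausdorffMeasure (Module.finrank ℝ V)

theorem IsometryEquiv.coe_zpow_eq_of_succ {α : Type*} [PseudoEMetricSpace α] (g : α ≃ᵢ α)
    (f : ℤ → α → α) (h0 : f 0 = id) (hsucc : ∀ k, f (k + 1) = f k ∘ g) (k : ℤ) :
    ⇑(g ^ k) = f k := by
  induction k using Int.induction_on with
  | zero => simp [h0]
  | succ k ih => rw [zpow_add_one, coe_mul, ih, hsucc]
  | pred k ih =>
    funext x
    rw [zpow_sub_one, mul_apply, ih, ← sub_add_cancel (-k : ℤ) 1, hsucc, add_sub_cancel_right,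
      Function.comp_apply, apply_inv_self]

instance Subgroup.countable_closure {G : Type*} [Group G] (s : Set G) [Countable s] :
    Countable (Subgroup.closure s) := by
  rw [FreeGroup.closure_eq_range]
  exact (countable_range _).to_subtype

instance : MeasurableConstSMul (E3 ≃ᵢ E3) E3 := ⟨fun f => f.continuous.measurable⟩

instance : SMulInvariantMeasure (E3 ≃ᵢ E3) E3 volume :=
  ⟨fun f _ hs => (IsometryEquiv.measurePreserving_volume f).measure_preimage hs.nullMeasurableSet⟩

theorem eq_zero_of_mem_Ico_of_add_mul_mem_Ico {u d : ℝ} {k : ℤ} (hu : u ∈ Ico 0 d)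
    (hk : u + k * d ∈ Ico 0 d) : k = 0 :=
  (existsUnique_add_zsmul_mem_Ico (hu.1.trans_lt hu.2) u 0).unique (by simpa using hk)
    (by simpa using hu)

namespace Dicosm

variable (p2 p3 q3 c : ℝ)

def motion (n a b : ℤ) (x : E3) : E3 :=
  vec (n.negOnePow * x 0 + 2 * a * p2 + 2 * b * p3) (n.negOnePow * x 1 + 2 * b * q3) (x 2 + n * c)

def box : Set E3 := {x | x 0 ∈ Ico 0 (2 * p2) ∧ x 1 ∈ Ico 0 (2 * q3) ∧ x 2 ∈ Ico 0 c}

variable {p2 p3 q3 c}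

@[simp] lemma motion_zero : motion p2 p3 q3 c 0 0 0 = id := by
  funext x; ext i; fin_cases i <;> simp [motion]

lemma motion_motion (n a b m a' b' : ℤ) (x : E3) :
    motion p2 p3 q3 c n a b (motion p2 p3 q3 c m a' b' x) =
      motion p2 p3 q3 c (n + m) (a + n.negOnePow * a') (b + n.negOnePow * b') x := by
  ext i; fin_cases i <;> simp [motion, Int.negOnePow_add] <;> ring

lemma coe_inv_eq_motion {g : E3 ≃ᵢ E3} {n a b : ℤ} (hg : ⇑g = motion p2 p3 q3 c n a b) :
    ⇑g⁻¹ = motion p2 p3 q3 c (-n) (-(n.negOnePow * a)) (-(n.negOnePow * b)) := by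
  funext x
  apply g.injective
  rw [IsometryEquiv.apply_inv_self, hg, motion_motion]
  simp [← mul_assoc]

variable (p2 p3 q3 c) in
def normalForms : Subgroup (E3 ≃ᵢ E3) where
  carrier := {g | ∃ n a b : ℤ, ⇑g = motion p2 p3 q3 c n a b}
  one_mem' := ⟨0, 0, 0, by simp⟩
  mul_mem' := by
    rintro g h ⟨n, a, b, hg⟩ ⟨m, a', b', hh⟩
    exact ⟨_, _, _, funext fun x => by rw [IsometryEquiv.mul_apply, hg, hh, motion_motion]⟩
  inv_mem' := by
    rintro g ⟨n, a, b, hg⟩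
    exact ⟨_, _, _, coe_inv_eq_motion hg⟩

lemma coe_eq_motion_of_halfTwistV {g : E3 ≃ᵢ E3} {p q : ℝ} (a b : ℤ) (hp : p = a * p2 + b * p3)
    (hq : q = b * q3) (hg : ∀ x, g x = halfTwistV p q c x) : ⇑g = motion p2 p3 q3 c 1 a b := by
  funext x; ext i; fin_cases i <;> simp [hg, halfTwistV, motion, hp, hq] <;> ring

lemma coe_zpow_eq_motion_of_coe_eq_motion_one {g : E3 ≃ᵢ E3} (hg : ⇑g = motion p2 p3 q3 c 1 0 0)
    (n : ℤ) : ⇑(g ^ n) = motion p2 p3 q3 c n 0 0 :=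
  g.coe_zpow_eq_of_succ (fun n => motion p2 p3 q3 c n 0 0) motion_zero
    (fun k => funext fun x => by simp [hg, motion_motion]) n

lemma coe_zpow_eq_motion_of_coe_eq_motion_zero {g : E3 ≃ᵢ E3} {a b : ℤ}
    (hg : ⇑g = motion p2 p3 q3 c 0 a b) (k : ℤ) : ⇑(g ^ k) = motion p2 p3 q3 c 0 (k * a) (k * b) :=
  g.coe_zpow_eq_of_succ (fun k => motion p2 p3 q3 c 0 (k * a) (k * b)) (by simp)
    (fun k => funext fun x => by simp [hg, motion_motion, add_mul]) k

lemma box_eq_preimage : box p2 q3 c = (MeasurableEquiv.toLp 2 (Fin 3 → ℝ)).symm ⁻¹'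
    univ.pi fun i => Ico 0 (![2 * p2, 2 * q3, c] i) := by
  ext x
  simp [box, Fin.forall_fin_succ]

lemma measurableSet_box : MeasurableSet (box p2 q3 c) := by
  rw [box_eq_preimage]
  exact (MeasurableEquiv.measurable _) (.univ_pi fun _ => measurableSet_Ico)

lemma volume_box (hp2 : 0 ≤ p2) (hq3 : 0 ≤ q3) :
    volume (box p2 q3 c) = ENNReal.ofReal (4 * c * q3 * p2) := by
  rw [box_eq_preimage,
    (EuclideanSpace.volume_preserving_symm_measurableEquiv_toLp (Fin 3)).measure_preimage
      (MeasurableSet.univ_pi fun _ => measurableSet_Ico).nullMeasurableSet,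
    volume_pi_pi, Fin.prod_univ_three, show 4 * c * q3 * p2 = 2 * p2 * (2 * q3) * c by ring,
    ENNReal.ofReal_mul (by positivity), ENNReal.ofReal_mul (by positivity)]
  simp [Real.volume_Ico]

lemma exists_motion_mem_box (hp2 : 0 < p2) (hq3 : 0 < q3) (hc : 0 < c) (x : E3) :
    ∃ n a b : ℤ, motion p2 p3 q3 c n a b x ∈ box p2 q3 c := by
  obtain ⟨n, hn, -⟩ := existsUnique_add_zsmul_mem_Ico hc (x 2) 0
  obtain ⟨b, hb, -⟩ := existsUnique_add_zsmul_mem_Ico (by positivity : 0 < 2 * q3)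
    ((n.negOnePow : ℝ) * x 1) 0
  obtain ⟨a, ha, -⟩ := existsUnique_add_zsmul_mem_Ico (by positivity : 0 < 2 * p2)
    ((n.negOnePow : ℝ) * x 0 + 2 * b * p3) 0
  refine ⟨n, a, b, ?_, ?_, ?_⟩
  · convert ha using 1 <;> simp [motion]; ring
  · convert hb using 1 <;> simp [motion]; ring
  · convert hn using 1 <;> simp [motion]

lemma eq_zero_of_mem_box_of_motion_mem_box {x : E3} {n a b : ℤ} (hx : x ∈ box p2 q3 c)
    (h : motion p2 p3 q3 c n a b x ∈ box p2 q3 c) : n = 0 ∧ a = 0 ∧ b = 0 := by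
  obtain ⟨hx0, hx1, hx2⟩ := hx
  obtain ⟨h0, h1, h2⟩ := h
  obtain rfl : n = 0 := eq_zero_of_mem_Ico_of_add_mul_mem_Ico hx2 (by simpa [motion] using h2)
  obtain rfl : b = 0 :=
    eq_zero_of_mem_Ico_of_add_mul_mem_Ico hx1 (by convert h1 using 1; simp [motion]; ring)
  obtain rfl : a = 0 :=
    eq_zero_of_mem_Ico_of_add_mul_mem_Ico hx0 (by convert h0 using 1; simp [motion]; ring)
  exact ⟨rfl, rfl, rfl⟩

lemma eq_one_of_mem_normalForms_of_mem_box {g : E3 ≃ᵢ E3} (hg : g ∈ normalForms p2 p3 q3 c)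
    {x : E3} (hx : x ∈ box p2 q3 c) (hgx : g x ∈ box p2 q3 c) : g = 1 := by
  obtain ⟨n, a, b, hg⟩ := hg
  obtain ⟨rfl, rfl, rfl⟩ := eq_zero_of_mem_box_of_motion_mem_box hx (hg ▸ hgx)
  exact IsometryEquiv.ext fun y => by simp [hg]

section Generators

variable {s1 s2 s3 : E3 ≃ᵢ E3} (h1 : ∀ x, s1 x = halfTwistV 0 0 c x)
  (h2 : ∀ x, s2 x = halfTwistV p2 0 c x) (h3 : ∀ x, s3 x = halfTwistV p3 q3 c x)
include h1 h2 h3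

lemma coe_generators_eq_motion : ⇑s1 = motion p2 p3 q3 c 1 0 0 ∧
    ⇑s2 = motion p2 p3 q3 c 1 1 0 ∧ ⇑s3 = motion p2 p3 q3 c 1 0 1 :=
  ⟨coe_eq_motion_of_halfTwistV 0 0 (by simp) (by simp) h1,
    coe_eq_motion_of_halfTwistV 1 0 (by simp) (by simp) h2,
    coe_eq_motion_of_halfTwistV 0 1 (by simp) (by simp) h3⟩

lemma closure_le_normalForms : Subgroup.closure {s1, s2, s3} ≤ normalForms p2 p3 q3 c := by
  obtain ⟨hs1, hs2, hs3⟩ := coe_generators_eq_motion h1 h2 h3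
  rw [Subgroup.closure_le]
  rintro g (rfl | rfl | rfl)
  exacts [⟨1, 0, 0, hs1⟩, ⟨1, 1, 0, hs2⟩, ⟨1, 0, 1, hs3⟩]

lemma exists_mem_closure_coe_eq_motion (n a b : ℤ) :
    ∃ g ∈ Subgroup.closure {s1, s2, s3}, ⇑g = motion p2 p3 q3 c n a b := by
  obtain ⟨hs1, hs2, hs3⟩ := coe_generators_eq_motion h1 h2 h3
  have ht2 : ⇑(s2 * s1⁻¹) = motion p2 p3 q3 c 0 1 0 := by
    funext x; simp [coe_inv_eq_motion hs1, hs2, motion_motion]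
  have ht3 : ⇑(s3 * s1⁻¹) = motion p2 p3 q3 c 0 0 1 := by
    funext x; simp [coe_inv_eq_motion hs1, hs3, motion_motion]
  have m1 : s1 ∈ Subgroup.closure {s1, s2, s3} := Subgroup.subset_closure (by simp)
  have m2 : s2 ∈ Subgroup.closure {s1, s2, s3} := Subgroup.subset_closure (by simp)
  have m3 : s3 ∈ Subgroup.closure {s1, s2, s3} := Subgroup.subset_closure (by simp)
  refine ⟨(s2 * s1⁻¹) ^ a * (s3 * s1⁻¹) ^ b * s1 ^ n, ?_, funext fun x => ?_⟩
  · exact mul_mem (mul_mem (zpow_mem (mul_mem m2 (inv_mem m1)) _)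
      (zpow_mem (mul_mem m3 (inv_mem m1)) _)) (zpow_mem m1 _)
  · simp [coe_zpow_eq_motion_of_coe_eq_motion_zero ht2,
      coe_zpow_eq_motion_of_coe_eq_motion_zero ht3, coe_zpow_eq_motion_of_coe_eq_motion_one hs1,
      motion_motion]

theorem isFundamentalDomain_box (hp2 : 0 < p2) (hq3 : 0 < q3) (hc : 0 < c) :
    IsFundamentalDomain (Subgroup.closure {s1, s2, s3}) (box p2 q3 c) := by
  refine .mk' measurableSet_box.nullMeasurableSet fun x => ?_
  obtain ⟨n, a, b, hx⟩ := exists_motion_mem_box (p3 := p3) hp2 hq3 hc x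
  obtain ⟨g, hg, hgx⟩ := exists_mem_closure_coe_eq_motion h1 h2 h3 n a b
  refine ⟨⟨g, hg⟩, show g x ∈ _ by rwa [hgx], fun g' hg'x => ?_⟩
  have hg'g : (g' : E3 ≃ᵢ E3) * g⁻¹ = 1 :=
    eq_one_of_mem_normalForms_of_mem_box (closure_le_normalForms h1 h2 h3 (g' * ⟨g, hg⟩⁻¹).2)
      (x := g x) (by rwa [hgx]) (by simpa using show (g' : E3 ≃ᵢ E3) x ∈ _ from hg'x)
  exact mul_inv_eq_one.1 (Subtype.ext hg'g)

end Generators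

end Dicosm

open MeasureTheory in
/-- The covolume of the dicosm group 𝒟ℐ = ⟨σ₁,σ₂,σ₃⟩ (half-turn twists about the vertical
lines through `(0,0)`, `(p₂,0)`, `(p₃,q₃)`, each with translational component `(0,0,c)`),
i.e. the number of unit cubes in a fundamental region, equals `4·c·q₃·p₂`. -/
theorem stmt19 (c : ℤ) (hc : 0 < c) (p2 p3 q3 : ℝ) (hp2 : 0 < p2) (hq3 : 0 < q3)
    (s1 s2 s3 : E3 ≃ᵢ E3)
    (h1 : ∀ x, s1 x = halfTwistV 0 0 (c : ℝ) x)
    (h2 : ∀ x, s2 x = halfTwistV p2 0 (c : ℝ) x)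
    (h3 : ∀ x, s3 x = halfTwistV p3 q3 (c : ℝ) x)
    (s : Set E3)
    (hs : IsFundamentalDomain (Subgroup.closure ({s1, s2, s3} : Set (E3 ≃ᵢ E3))) s volume) :
    volume s = ENNReal.ofReal (4 * (c : ℝ) * q3 * p2) := by
  rw [hs.measure_eq (Dicosm.isFundamentalDomain_box h1 h2 h3 hp2 hq3 (by exact_mod_cast hc)),
    Dicosm.volume_box hp2.le hq3.le]
end
end
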